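/- arXiv:0806.1540 — 8 statements merged into one kernel-verified Lean document; each statement's English description precedes it below -/
import Mathlib

section
/- Let C be a category with pullbacks in which every endomorphism is an isomorphism (an EI-category with pullbacks). Then every morphism of C is a monomorphism. -/
open CategoryTheory

/-- In an EI-category with pullbacks, every morphism is a monomorphism. -/
theorem ei_hasPullbacks_mono {C : Type*} [Category C] [Limits.HasPullbacks C]
    (hEI : ∀ (X : C) (e : X ⟶ X), IsIso e)
    {X Y : C} (f : X ⟶ Y) : Mono f := by
  open Limits in
  -- diagonal into the pullback of f with itself
  let δ : X ⟶ pullback f f := pullback.lift (𝟙 X) (𝟙 X) rfl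
  have hδ1 : δ ≫ pullback.fst f f = 𝟙 X := pullback.lift_fst _ _ _
  have hδ2 : δ ≫ pullback.snd f f = 𝟙 X := pullback.lift_snd _ _ _
  have hiso : IsIso (pullback.fst f f ≫ δ) := hEI _ _
  have key : pullback.fst f f = pullback.snd f f := by
    have h1 : (pullback.fst f f ≫ δ) ≫ pullback.fst f f = pullback.fst f f := by
      rw [Category.assoc, hδ1, Category.comp_id]
    have h2 : (pullback.fst f f ≫ δ) ≫ pullback.snd f f = pullback.fst f f := by
      rw [Category.assoc, hδ2, Category.comp_id]
    calc pullback.fst f f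
        = inv (pullback.fst f f ≫ δ) ≫ (pullback.fst f f ≫ δ) ≫ pullback.fst f f := by
          rw [IsIso.inv_hom_id_assoc]
      _ = inv (pullback.fst f f ≫ δ) ≫ (pullback.fst f f ≫ δ) ≫ pullback.snd f f := by
          rw [h1, h2]
      _ = pullback.snd f f := by rw [IsIso.inv_hom_id_assoc]
  constructor
  intro Z g h hgh
  have : pullback.lift g h hgh ≫ pullback.fst f f = pullback.lift g h hgh ≫ pullback.snd f f := by
    rw [key]
  simpa [pullback.lift_fst, pullback.lift_snd] using this
end

section
/- Let C be a model category with a zero object and binary products and coproducts, satisfying: (i) for all cofibrant objects X and Y, the canonical morphism X ⨿ Y ⟶ X ⨯ Y (whose components are (𝟙_X, 0) out of X and (0, 𝟙_Y) out of Y) is a weak equivalence; (ii) whenever f and g are acyclic fibrations, the product morphism prod.map f g is a weak equivalence; (iii) whenever f and g are acyclic cofibrations, the coproduct morphism coprod.map f g is a weak equivalence. Suppose A and C are cofibrant objects. Then morphisms f : A ⟶ B and g : C ⟶ D are both weak equivalences if and only if the product morphism prod.map f g : A ⨯ C ⟶ B ⨯ D is a weak equivalence. -/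
/-!
Factor `f = i ≫ p` and `g = j ≫ q` with `i`, `j` acyclic cofibrations and `p`, `q` fibrations.
The codomains of `i` and `j` are again cofibrant, so in the naturality square of
`X ⨿ Y ⟶ X ⨯ Y` along `i` and `j` three sides are weak equivalences by (i) and (iii), hence so
is `prod.map i j`. By two-out-of-three it remains to see that `p` and `q` are weak equivalences
iff `prod.map p q` is: one direction is (ii), the other holds because `p` and `q` are retracts
of `prod.map p q`.
-/

open CategoryTheory Limits



/-- A model structure on a category `C`: classes of weak equivalences,
fibrations and cofibrations satisfying the two-out-of-three, retract,
lifting and factorization axioms. -/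
structure ModelStructure (C : Type*) [Category C] where
  weq : MorphismProperty C
  fib : MorphismProperty C
  cof : MorphismProperty C
  /-- two-out-of-three: composition -/
  weq_comp : ∀ {X Y Z : C} (f : X ⟶ Y) (g : Y ⟶ Z), weq f → weq g → weq (f ≫ g)
  /-- two-out-of-three: left cancellation -/
  weq_of_comp_left : ∀ {X Y Z : C} (f : X ⟶ Y) (g : Y ⟶ Z), weq g → weq (f ≫ g) → weq f
  /-- two-out-of-three: right cancellation -/
  weq_of_comp_right : ∀ {X Y Z : C} (f : X ⟶ Y) (g : Y ⟶ Z), weq f → weq (f ≫ g) → weq g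
  /-- weak equivalences are closed under retracts -/
  weq_retract : ∀ {f g : Arrow C} (i : f ⟶ g) (r : g ⟶ f), i ≫ r = 𝟙 f →
    weq g.hom → weq f.hom
  /-- fibrations are closed under retracts -/
  fib_retract : ∀ {f g : Arrow C} (i : f ⟶ g) (r : g ⟶ f), i ≫ r = 𝟙 f →
    fib g.hom → fib f.hom
  /-- cofibrations are closed under retracts -/
  cof_retract : ∀ {f g : Arrow C} (i : f ⟶ g) (r : g ⟶ f), i ≫ r = 𝟙 f →
    cof g.hom → cof f.hom
  /-- lifting: cofibrations against acyclic fibrations -/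
  lift_cof_trivFib : ∀ {A B X Y : C} (i : A ⟶ B) (p : X ⟶ Y),
    cof i → fib p → weq p → HasLiftingProperty i p
  /-- lifting: acyclic cofibrations against fibrations -/
  lift_trivCof_fib : ∀ {A B X Y : C} (i : A ⟶ B) (p : X ⟶ Y),
    cof i → weq i → fib p → HasLiftingProperty i p
  /-- factorization as a cofibration followed by an acyclic fibration -/
  fact_cof_trivFib : ∀ {X Y : C} (f : X ⟶ Y),
    ∃ (Z : C) (i : X ⟶ Z) (p : Z ⟶ Y), cof i ∧ fib p ∧ weq p ∧ i ≫ p = f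
  /-- factorization as an acyclic cofibration followed by a fibration -/
  fact_trivCof_fib : ∀ {X Y : C} (f : X ⟶ Y),
    ∃ (Z : C) (i : X ⟶ Z) (p : Z ⟶ Y), cof i ∧ weq i ∧ fib p ∧ i ≫ p = f


open ZeroObject

/-- An object is cofibrant if the unique map from the zero (initial) object is
a cofibration. -/
def ModelStructure.Cofibrant {C : Type*} [Category C] [HasZeroObject C]
    [HasZeroMorphisms C] (M : ModelStructure C) (X : C) : Prop :=
  M.cof (0 : (0 : C) ⟶ X)

namespace ModelStructure

variable {C : Type*} [Category C] (M : ModelStructure C)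

/-- By the retract argument: factor `i ≫ j` as a cofibration followed by an acyclic fibration
and lift against the latter. -/
theorem cof_comp {X Y Z : C} {i : X ⟶ Y} {j : Y ⟶ Z} (hi : M.cof i) (hj : M.cof j) :
    M.cof (i ≫ j) := by
  obtain ⟨W, k, p, hk, hp, hpw, hfac⟩ := M.fact_cof_trivFib (i ≫ j)
  have : HasLiftingProperty (i ≫ j) p := by
    have := M.lift_cof_trivFib i p hi hp hpw
    have := M.lift_cof_trivFib j p hj hp hpw
    infer_instance
  have sq : CommSq k (i ≫ j) p (𝟙 Z) := ⟨by simp [hfac]⟩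
  obtain ⟨⟨l⟩⟩ := this.sq_hasLift sq
  refine M.cof_retract (f := Arrow.mk (i ≫ j)) (g := Arrow.mk k)
      (Arrow.homMk (𝟙 X) l.l (by simp [l.fac_left]))
      (Arrow.homMk (𝟙 X) p (by simp [hfac])) ?_ hk
  ext
  · simp
  · exact l.fac_right

theorem weq_comp_iff_right {X Y Z : C} {f : X ⟶ Y} (hf : M.weq f) (g : Y ⟶ Z) :
    M.weq (f ≫ g) ↔ M.weq g :=
  ⟨M.weq_of_comp_right f g hf, M.weq_comp f g hf⟩

section Pointed

variable [HasZeroMorphisms C]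

theorem Cofibrant.of_cof [HasZeroObject C] {M : ModelStructure C} {X Y : C}
    (hX : M.Cofibrant X) {i : X ⟶ Y} (hi : M.cof i) : M.Cofibrant Y := by
  simpa [Cofibrant] using M.cof_comp hX hi

variable [HasBinaryProducts C] {A B X Y : C} {p : A ⟶ B} {q : X ⟶ Y}

theorem weq_of_weq_prodMap_left (h : M.weq (prod.map p q)) : M.weq p := by
  refine M.weq_retract (f := Arrow.mk p) (g := Arrow.mk (prod.map p q))
    (Arrow.homMk (prod.lift (𝟙 A) 0) (prod.lift (𝟙 B) 0) (by apply prod.hom_ext <;> simp))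
    (Arrow.homMk prod.fst prod.fst (by simp)) ?_ h
  ext <;> exact prod.lift_fst _ _

theorem weq_of_weq_prodMap_right (h : M.weq (prod.map p q)) : M.weq q := by
  refine M.weq_retract (f := Arrow.mk q) (g := Arrow.mk (prod.map p q))
    (Arrow.homMk (prod.lift 0 (𝟙 X)) (prod.lift 0 (𝟙 Y)) (by apply prod.hom_ext <;> simp))
    (Arrow.homMk prod.snd prod.snd (by simp)) ?_ h
  ext <;> exact prod.lift_snd _ _

end Pointed

end ModelStructure

section CoprodToProd

variable {C : Type*} [Category C] [HasZeroMorphisms C] [HasBinaryProducts C]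
  [HasBinaryCoproducts C]

noncomputable def coprodToProd (X Y : C) : X ⨿ Y ⟶ X ⨯ Y :=
  coprod.desc (prod.lift (𝟙 X) 0) (prod.lift 0 (𝟙 Y))

theorem coprodToProd_naturality {A B X Y : C} (f : A ⟶ B) (g : X ⟶ Y) :
    coprodToProd A X ≫ prod.map f g = coprod.map f g ≫ coprodToProd B Y := by
  ext <;> simp [coprodToProd]

theorem ModelStructure.weq_prodMap_of_trivCof [HasZeroObject C] (M : ModelStructure C)
    (h1 : ∀ X Y : C, M.Cofibrant X → M.Cofibrant Y → M.weq (coprodToProd X Y))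
    (h3 : ∀ {A B X Y : C} (f : A ⟶ B) (g : X ⟶ Y),
      M.cof f → M.weq f → M.cof g → M.weq g → M.weq (coprod.map f g))
    {A B X Y : C} {i : A ⟶ B} {j : X ⟶ Y} (hA : M.Cofibrant A) (hX : M.Cofibrant X)
    (hci : M.cof i) (hwi : M.weq i) (hcj : M.cof j) (hwj : M.weq j) :
    M.weq (prod.map i j) := by
  rw [← M.weq_comp_iff_right (h1 A X hA hX), coprodToProd_naturality]
  exact M.weq_comp _ _ (h3 i j hci hwi hcj hwj) (h1 B Y (hA.of_cof hci) (hX.of_cof hcj))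

end CoprodToProd

/-- In a pointed model category with binary (co)products in which
(i) `X ⨿ Y ⟶ X ⨯ Y` is a weak equivalence for cofibrant `X`, `Y`,
(ii) products of acyclic fibrations are weak equivalences, and
(iii) coproducts of acyclic cofibrations are weak equivalences,
maps `f : A ⟶ B` and `g : X ⟶ Y` with `A`, `X` cofibrant are both weak
equivalences iff `prod.map f g` is a weak equivalence. -/
theorem weq_prodMap_iff {C : Type*} [Category C] [HasZeroObject C]
    [HasZeroMorphisms C] [HasBinaryProducts C] [HasBinaryCoproducts C]
    (M : ModelStructure C)
    (h1 : ∀ X Y : C, M.Cofibrant X → M.Cofibrant Y →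
      M.weq (coprod.desc (prod.lift (𝟙 X) 0) (prod.lift 0 (𝟙 Y)) : X ⨿ Y ⟶ X ⨯ Y))
    (h2 : ∀ {A B X Y : C} (f : A ⟶ B) (g : X ⟶ Y),
      M.fib f → M.weq f → M.fib g → M.weq g → M.weq (prod.map f g))
    (h3 : ∀ {A B X Y : C} (f : A ⟶ B) (g : X ⟶ Y),
      M.cof f → M.weq f → M.cof g → M.weq g → M.weq (coprod.map f g))
    {A B X Y : C} (f : A ⟶ B) (g : X ⟶ Y)
    (hA : M.Cofibrant A) (hX : M.Cofibrant X) :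
    (M.weq f ∧ M.weq g) ↔ M.weq (prod.map f g) := by
  obtain ⟨A', i, p, hci, hwi, hfp, rfl⟩ := M.fact_trivCof_fib f
  obtain ⟨X', j, q, hcj, hwj, hfq, rfl⟩ := M.fact_trivCof_fib g
  have hwij : M.weq (prod.map i j) := M.weq_prodMap_of_trivCof h1 h3 hA hX hci hwi hcj hwj
  calc (M.weq (i ≫ p) ∧ M.weq (j ≫ q)) ↔ M.weq p ∧ M.weq q := by
        rw [M.weq_comp_iff_right hwi, M.weq_comp_iff_right hwj]
    _ ↔ M.weq (prod.map p q) :=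
        ⟨fun ⟨hwp, hwq⟩ => h2 p q hfp hwp hfq hwq,
          fun h => ⟨M.weq_of_weq_prodMap_left h, M.weq_of_weq_prodMap_right h⟩⟩
    _ ↔ M.weq (prod.map (i ≫ p) (j ≫ q)) := by
        rw [← prod.map_map, M.weq_comp_iff_right hwij]
end

section
/- Every based map γ : m₊ → n₊ admits a three-fold factorization γ = j ∘ α ∘ i*, where i : r₊ → m₊ and j : s₊ → n₊ are ordered maps, i* : m₊ → r₊ is the collapse of i, and α : r₊ → s₊ is a regular surjective based map. Moreover this factorization is unique: the natural numbers r and s, the ordered maps i and j, and the regular surjection α are uniquely determined by γ (i represents the complement of γ⁻¹(0) in m₊ and j represents the image of γ in n₊). -/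
/-!  `n₊` is formalized as `Fin (n+1)` with basepoint `0`.
A *based map* is a function with `f 0 = 0`. -/

/-- A based map `f : m₊ → n₊` is *regular* if `f ⁻¹(0) = {0}`,
i.e. only the basepoint is mapped to the basepoint. -/
def RegularMap {m n : ℕ} (f : Fin (m + 1) → Fin (n + 1)) : Prop :=
  f 0 = 0 ∧ ∀ x, f x = 0 → x = 0

/-- A based map `f : m₊ → n₊` is *ordered* if `f x < f y` whenever `x < y`. -/
def OrderedMap {m n : ℕ} (f : Fin (m + 1) → Fin (n + 1)) : Prop :=
  f 0 = 0 ∧ StrictMono f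

/-- `istar` is the *collapse* of `i : m₊ → n₊`: it satisfies `istar (i x) = x`
for all `x`, and `istar y = 0` for every `y` not in the image of `i`. -/
def CollapseOf {m n : ℕ} (i : Fin (m + 1) → Fin (n + 1))
    (istar : Fin (n + 1) → Fin (m + 1)) : Prop :=
  (∀ x, istar (i x) = x) ∧ ∀ y, (∀ x, i x ≠ y) → istar y = 0

/-- The data of a three-fold factorization `γ = j ∘ α ∘ i*` of a based map
`γ : m₊ → n₊`: `i : r₊ → m₊` and `j : s₊ → n₊` are ordered maps, `istar` is
the collapse of `i`, and `alpha : r₊ → s₊` is a regular surjective based map. -/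
structure ThreeFoldFactorization {m n : ℕ} (γ : Fin (m + 1) → Fin (n + 1)) where
  r : ℕ
  s : ℕ
  i : Fin (r + 1) → Fin (m + 1)
  istar : Fin (m + 1) → Fin (r + 1)
  alpha : Fin (r + 1) → Fin (s + 1)
  j : Fin (s + 1) → Fin (n + 1)
  ordered_i : OrderedMap i
  collapse_i : CollapseOf i istar
  regular_alpha : RegularMap alpha
  surjective_alpha : Function.Surjective alpha
  ordered_j : OrderedMap j
  factorization : γ = j ∘ alpha ∘ istar

section Helpers

variable {m n : ℕ} {γ : Fin (m + 1) → Fin (n + 1)}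

lemma tff_istar_zero (G : ThreeFoldFactorization γ) : G.istar 0 = 0 := by
  have := G.collapse_i.1 0
  rwa [G.ordered_i.1] at this

lemma tff_gamma_i (G : ThreeFoldFactorization γ) (x : Fin (G.r + 1)) :
    γ (G.i x) = G.j (G.alpha x) := by
  have h := congrFun G.factorization (G.i x)
  simpa [G.collapse_i.1 x] using h

lemma tff_i_ne_zero (G : ThreeFoldFactorization γ) {x : Fin (G.r + 1)} (hx : x ≠ 0) :
    G.i x ≠ 0 := by
  have h0 : (0 : Fin (G.r + 1)) < x := Fin.pos_of_ne_zero hx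
  have := G.ordered_i.2 h0
  rw [G.ordered_i.1] at this
  exact Fin.pos_iff_ne_zero.mp this

lemma tff_j_ne_zero (G : ThreeFoldFactorization γ) {b : Fin (G.s + 1)} (hb : b ≠ 0) :
    G.j b ≠ 0 := by
  have h0 : (0 : Fin (G.s + 1)) < b := Fin.pos_of_ne_zero hb
  have := G.ordered_j.2 h0
  rw [G.ordered_j.1] at this
  exact Fin.pos_iff_ne_zero.mp this

lemma tff_range_i (G : ThreeFoldFactorization γ) :
    Set.range G.i = insert 0 {x | γ x ≠ 0} := by
  ext y
  simp only [Set.mem_range, Set.mem_insert_iff, Set.mem_setOf_eq]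
  constructor
  · rintro ⟨x, rfl⟩
    by_cases hx : x = 0
    · left; rw [hx, G.ordered_i.1]
    · right
      rw [tff_gamma_i G x]
      have : G.alpha x ≠ 0 := fun h => hx (G.regular_alpha.2 x h)
      exact tff_j_ne_zero G this
  · rintro (rfl | hy)
    · exact ⟨0, G.ordered_i.1⟩
    · by_contra h
      push_neg at h
      have h0 : G.istar y = 0 := G.collapse_i.2 y fun x hx => h x hx
      have : γ y = 0 := by
        have hc := congrFun G.factorization y
        simpa [h0, G.regular_alpha.1, G.ordered_j.1] using hc
      exact hy this

lemma tff_range_j (G : ThreeFoldFactorization γ) :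
    Set.range G.j = Set.range γ := by
  ext y
  constructor
  · rintro ⟨b, rfl⟩
    obtain ⟨a, rfl⟩ := G.surjective_alpha b
    exact ⟨G.i a, (tff_gamma_i G a)⟩
  · rintro ⟨x, rfl⟩
    exact ⟨G.alpha (G.istar x), (congrFun G.factorization x).symm⟩

lemma tff_ext (G F : ThreeFoldFactorization γ)
    (hi : Set.range G.i = Set.range F.i) (hj : Set.range G.j = Set.range F.j) :
    G = F := by
  obtain ⟨r, s, i, istar, alpha, j, oi, ci, ra, sa, oj, fac⟩ := G
  obtain ⟨r', s', i', istar', alpha', j', oi', ci', ra', sa', oj', fac'⟩ := F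
  simp only at hi hj
  have hr : r = r' := by
    have h1 := Nat.card_range_of_injective oi.2.injective
    have h2 := Nat.card_range_of_injective oi'.2.injective
    rw [hi, h2] at h1
    have := h1
    simp only [Nat.card_eq_fintype_card, Fintype.card_fin] at this
    omega
  subst hr
  have hs : s = s' := by
    have h1 := Nat.card_range_of_injective oj.2.injective
    have h2 := Nat.card_range_of_injective oj'.2.injective
    rw [hj, h2] at h1
    have := h1
    simp only [Nat.card_eq_fintype_card, Fintype.card_fin] at this
    omega
  subst hs
  have hii : i = i' := by
    have inst : WellFoundedLT (Fin (r + 1)) := inferInstance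
    exact (StrictMono.range_inj oi.2 oi'.2).mp hi
  subst hii
  have hjj : j = j' := by
    have inst : WellFoundedLT (Fin (s + 1)) := inferInstance
    exact (StrictMono.range_inj oj.2 oj'.2).mp hj
  subst hjj
  have hst : istar = istar' := by
    funext y
    by_cases h : ∃ x, i x = y
    · obtain ⟨x, rfl⟩ := h
      rw [ci.1, ci'.1]
    · push_neg at h
      rw [ci.2 y h, ci'.2 y h]
  subst hst
  have hal : alpha = alpha' := by
    funext x
    apply oj.2.injective
    have h1 : γ (i x) = j (alpha x) := by rw [fac]; simp [ci.1 x]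
    have h2 : γ (i x) = j (alpha' x) := by rw [fac']; simp [ci.1 x]
    rw [← h1, ← h2]
  subst hal
  rfl

end Helpers

section Construction

variable {m n : ℕ} (γ : Fin (m + 1) → Fin (n + 1)) (hγ : γ 0 = 0)

def Aset : Finset (Fin (m + 1)) := insert 0 (Finset.univ.filter (fun x => γ x ≠ 0))

lemma Aset_card : (Aset γ).card = (Aset γ).card - 1 + 1 :=
  (Nat.succ_pred_eq_of_pos (Finset.card_pos.2 ⟨0, Finset.mem_insert_self _ _⟩)).symm

def Bset : Finset (Fin (n + 1)) := Finset.image γ Finset.univ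

lemma Bset_card : (Bset γ).card = (Bset γ).card - 1 + 1 :=
  (Nat.succ_pred_eq_of_pos (Finset.card_pos.2 ⟨γ 0, Finset.mem_image_of_mem γ (Finset.mem_univ 0)⟩)).symm

noncomputable def iF : Fin ((Aset γ).card - 1 + 1) → Fin (m + 1) :=
  (Aset γ).orderEmbOfFin (Aset_card γ)

noncomputable def jF : Fin ((Bset γ).card - 1 + 1) → Fin (n + 1) :=
  (Bset γ).orderEmbOfFin (Bset_card γ)

lemma range_iF : Set.range (iF γ) = (Aset γ : Set (Fin (m + 1))) :=
  Finset.range_orderEmbOfFin _ _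

lemma range_jF : Set.range (jF γ) = (Bset γ : Set (Fin (n + 1))) :=
  Finset.range_orderEmbOfFin _ _

lemma iF_zero : iF γ 0 = 0 := by
  have h0 : (0 : Fin (m + 1)) ∈ Set.range (iF γ) := by
    rw [range_iF]; exact Finset.mem_insert_self _ _
  obtain ⟨a, ha⟩ := h0
  have : iF γ 0 ≤ iF γ a := ((Aset γ).orderEmbOfFin (Aset_card γ)).monotone (Fin.zero_le a)
  rw [ha] at this
  exact Fin.le_zero_iff.mp this

lemma jF_zero (hγ : γ 0 = 0) : jF γ 0 = 0 := by
  have h0 : (0 : Fin (n + 1)) ∈ Set.range (jF γ) := by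
    rw [range_jF]
    exact Finset.mem_coe.mpr (Finset.mem_image.mpr ⟨0, Finset.mem_univ 0, hγ⟩)
  obtain ⟨a, ha⟩ := h0
  have : jF γ 0 ≤ jF γ a := ((Bset γ).orderEmbOfFin (Bset_card γ)).monotone (Fin.zero_le a)
  rw [ha] at this
  exact Fin.le_zero_iff.mp this

noncomputable def istarF : Fin (m + 1) → Fin ((Aset γ).card - 1 + 1) := fun y =>
  if h : y ∈ Aset γ then ((Aset γ).orderIsoOfFin (Aset_card γ)).symm ⟨y, h⟩ else 0

lemma istarF_iF (x : Fin ((Aset γ).card - 1 + 1)) : istarF γ (iF γ x) = x := by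
  have hmem : iF γ x ∈ Aset γ := Finset.orderEmbOfFin_mem _ _ _
  rw [istarF, dif_pos hmem]
  have : (⟨iF γ x, hmem⟩ : {a // a ∈ Aset γ}) = (Aset γ).orderIsoOfFin (Aset_card γ) x :=
    Subtype.ext (Finset.coe_orderIsoOfFin_apply _ _ _).symm
  rw [this, OrderIso.symm_apply_apply]

lemma istarF_not_mem {y : Fin (m + 1)} (hy : y ∉ Aset γ) : istarF γ y = 0 := by
  rw [istarF, dif_neg hy]

noncomputable def alphaF : Fin ((Aset γ).card - 1 + 1) → Fin ((Bset γ).card - 1 + 1) := fun x =>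
  ((Bset γ).orderIsoOfFin (Bset_card γ)).symm
    ⟨γ (iF γ x), Finset.mem_image_of_mem γ (Finset.mem_univ _)⟩

lemma jF_alphaF (x : Fin ((Aset γ).card - 1 + 1)) : jF γ (alphaF γ x) = γ (iF γ x) := by
  rw [alphaF, jF]
  rw [← Finset.coe_orderIsoOfFin_apply, OrderIso.apply_symm_apply]

lemma jF_injective : Function.Injective (jF γ) :=
  ((Bset γ).orderEmbOfFin (Bset_card γ)).injective

noncomputable def Ffact : ThreeFoldFactorization γ where
  r := (Aset γ).card - 1
  s := (Bset γ).card - 1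
  i := iF γ
  istar := istarF γ
  alpha := alphaF γ
  j := jF γ
  ordered_i := ⟨iF_zero γ, ((Aset γ).orderEmbOfFin (Aset_card γ)).strictMono⟩
  ordered_j := ⟨jF_zero γ hγ, ((Bset γ).orderEmbOfFin (Bset_card γ)).strictMono⟩
  collapse_i := ⟨istarF_iF γ, fun y hy => istarF_not_mem γ (by
    intro hmem
    rw [← Finset.mem_coe, ← range_iF] at hmem
    obtain ⟨x, hx⟩ := hmem
    exact hy x hx)⟩
  regular_alpha := by
    constructor
    · apply jF_injective γ
      rw [jF_alphaF γ 0, iF_zero, hγ, jF_zero γ hγ]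
    · intro x hx
      by_contra hx0
      have h1 : γ (iF γ x) = 0 := by rw [← jF_alphaF γ x, hx, jF_zero γ hγ]
      have h2 : iF γ x ≠ 0 := by
        have h0 : (0 : Fin _) < x := Fin.pos_of_ne_zero hx0
        have := ((Aset γ).orderEmbOfFin (Aset_card γ)).strictMono h0
        rw [show ((Aset γ).orderEmbOfFin (Aset_card γ)) 0 = iF γ 0 from rfl, iF_zero] at this
        exact Fin.pos_iff_ne_zero.mp this
      have hmem : iF γ x ∈ Aset γ := Finset.orderEmbOfFin_mem _ _ _
      rcases Finset.mem_insert.mp hmem with h | h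
      · exact h2 h
      · exact (Finset.mem_filter.mp h).2 h1
  surjective_alpha := by
    intro b
    have hb : jF γ b ∈ Bset γ := Finset.orderEmbOfFin_mem _ _ _
    obtain ⟨x, _, hx⟩ := Finset.mem_image.mp hb
    by_cases h0 : γ x = 0
    · refine ⟨0, ?_⟩
      apply jF_injective γ
      rw [jF_alphaF γ 0, iF_zero, hγ, ← hx, h0]
    · have hmem : x ∈ Aset γ := Finset.mem_insert_of_mem (Finset.mem_filter.mpr ⟨Finset.mem_univ _, h0⟩)
      rw [← Finset.mem_coe, ← range_iF] at hmem
      obtain ⟨a, ha⟩ := hmem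
      refine ⟨a, ?_⟩
      apply jF_injective γ
      rw [jF_alphaF γ a, ha, hx]
  factorization := by
    funext x
    simp only [Function.comp_apply]
    by_cases hmem : x ∈ Aset γ
    · have : x ∈ Set.range (iF γ) := by rw [range_iF]; exact hmem
      obtain ⟨a, rfl⟩ := this
      rw [istarF_iF, jF_alphaF γ a]
    · rw [istarF_not_mem γ hmem]
      have hx0 : γ x = 0 := by
        by_contra h
        exact hmem (Finset.mem_insert_of_mem (Finset.mem_filter.mpr ⟨Finset.mem_univ _, h⟩))
      have : alphaF γ 0 = 0 := by
        apply jF_injective γ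
        rw [jF_alphaF γ 0, iF_zero, hγ, jF_zero γ hγ]
      rw [this, jF_zero γ hγ, hx0]

end Construction

/-- Every based map `γ : m₊ → n₊` admits a three-fold factorization
`γ = j ∘ α ∘ i*`, in which `i` represents the complement of `γ⁻¹(0)` in `m₊`
and `j` represents the image of `γ` in `n₊`; moreover the factorization
(`r`, `s`, `i`, `α`, `j`) is uniquely determined by `γ`. -/
theorem threeFold_factorization_existsUnique {m n : ℕ}
    (γ : Fin (m + 1) → Fin (n + 1)) (hγ : γ 0 = 0) :
    ∃ F : ThreeFoldFactorization γ,
      Set.range F.i = insert 0 {x | γ x ≠ 0} ∧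
      Set.range F.j = Set.range γ ∧
      ∀ G : ThreeFoldFactorization γ, G = F := by
  refine ⟨Ffact γ hγ, tff_range_i _, tff_range_j _, fun G => tff_ext G _ ?_ ?_⟩
  · rw [tff_range_i, tff_range_i]
  · rw [tff_range_j, tff_range_j]
end

section
/- Let i : m₊ → n₊, j : m₊ → r₊, k : n₊ → s₊ and l : r₊ → s₊ be ordered maps with k ∘ i = l ∘ j (a commutative square of ordered maps). Then the interchange identity j ∘ i* = l* ∘ k holds if and only if the square is a pullback of based sets, which in turn holds if and only if the intersection of the images of k and l equals the image of k ∘ i. -/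
/-- For a commutative square `k ∘ i = l ∘ j` of ordered maps, the interchange
identity `j ∘ i* = l* ∘ k` holds iff the square is a pullback of based sets,
which holds iff the intersection of the images of `k` and `l` equals the
image of `k ∘ i`. -/
theorem interchange_iff_pullback {m n r s : ℕ}
    (i : Fin (m + 1) → Fin (n + 1)) (j : Fin (m + 1) → Fin (r + 1))
    (k : Fin (n + 1) → Fin (s + 1)) (l : Fin (r + 1) → Fin (s + 1))
    (hi : OrderedMap i) (hj : OrderedMap j) (hk : OrderedMap k) (hl : OrderedMap l)
    (istar : Fin (n + 1) → Fin (m + 1)) (lstar : Fin (s + 1) → Fin (r + 1))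
    (histar : CollapseOf i istar) (hlstar : CollapseOf l lstar)
    (hcomm : k ∘ i = l ∘ j) :
    ((j ∘ istar = lstar ∘ k) ↔
      (∀ (y : Fin (n + 1)) (z : Fin (r + 1)), k y = l z →
        ∃! x : Fin (m + 1), i x = y ∧ j x = z)) ∧
    ((∀ (y : Fin (n + 1)) (z : Fin (r + 1)), k y = l z →
        ∃! x : Fin (m + 1), i x = y ∧ j x = z) ↔
      Set.range k ∩ Set.range l = Set.range (k ∘ i)) := by
  have hii := hi.2.injective
  have hki := hk.2.injective
  have hli := hl.2.injective
  have hcomm' : ∀ x, k (i x) = l (j x) := fun x => congrFun hcomm x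
  constructor
  · constructor
    · intro hint y z hyz
      have h1 : j (istar y) = lstar (k y) := congrFun hint y
      have h2 : lstar (k y) = z := by rw [hyz, hlstar.1]
      by_cases hy : ∃ x, i x = y
      · obtain ⟨x, rfl⟩ := hy
        refine ⟨x, ⟨rfl, ?_⟩, fun w hw => hii hw.1⟩
        rw [histar.1] at h1
        rw [h1, h2]
      · exfalso
        push_neg at hy
        have h0 : istar y = 0 := histar.2 y hy
        have hz0 : z = 0 := by rw [← h2, ← h1, h0, hj.1]
        have : k y = 0 := by rw [hyz, hz0, hl.1]
        have : y = 0 := hki (by rw [this, hk.1])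
        exact hy 0 (by rw [hi.1, this])
    · intro hpb
      funext y
      by_cases hy : ∃ x, i x = y
      · obtain ⟨x, rfl⟩ := hy
        simp only [Function.comp_apply, histar.1, hcomm' x, hlstar.1]
      · push_neg at hy
        simp only [Function.comp_apply, histar.2 y hy, hj.1]
        by_cases hz : ∃ z, l z = k y
        · obtain ⟨z, hz⟩ := hz
          obtain ⟨x, ⟨hx1, _⟩, _⟩ := hpb y z hz.symm
          exact absurd hx1 (hy x)
        · push_neg at hz
          exact (hlstar.2 (k y) hz).symm
  · constructor
    · intro hpb
      ext w
      constructor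
      · rintro ⟨⟨y, rfl⟩, ⟨z, hz⟩⟩
        obtain ⟨x, ⟨rfl, _⟩, _⟩ := hpb y z hz.symm
        exact ⟨x, rfl⟩
      · rintro ⟨x, rfl⟩
        exact ⟨⟨i x, rfl⟩, ⟨j x, (hcomm' x).symm⟩⟩
    · intro hrange y z hyz
      have : k y ∈ Set.range k ∩ Set.range l := ⟨⟨y, rfl⟩, ⟨z, hyz.symm⟩⟩
      rw [hrange] at this
      obtain ⟨x, hx⟩ := this
      have hxy : i x = y := hki hx
      have hxz : j x = z := hli (by rw [← hcomm' x, hxy]; exact hyz)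
      exact ⟨x, ⟨hxy, hxz⟩, fun w hw => hii (hw.1.trans hxy.symm)⟩
end

section
/- Every based map β : m₊ → n₊ factors uniquely as β = γ ∘ i*, where i : r₊ → m₊ is an ordered map, i* is its collapse, and γ : r₊ → n₊ is a regular based map; that is, r, i and γ are uniquely determined by β (i represents the complement of β⁻¹(0)). -/
/-- The data of a factorization `β = γ ∘ i*` of a based map `β : m₊ → n₊`,
where `i : r₊ → m₊` is an ordered map, `i*` is its collapse, and
`γ : r₊ → n₊` is a regular based map. -/
structure CokernelFactorization {m n : ℕ} (β : Fin (m + 1) → Fin (n + 1)) where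
  r : ℕ
  i : Fin (r + 1) → Fin (m + 1)
  istar : Fin (m + 1) → Fin (r + 1)
  gamma : Fin (r + 1) → Fin (n + 1)
  ordered_i : OrderedMap i
  collapse_i : CollapseOf i istar
  regular_gamma : RegularMap gamma
  factorization : β = gamma ∘ istar

/-- The range of `i` in any cokernel factorization is forced. -/
lemma cf_range {m n : ℕ} {β : Fin (m + 1) → Fin (n + 1)}
    (G : CokernelFactorization β) :
    Set.range G.i = insert 0 {x | β x ≠ 0} := by
  ext y
  constructor
  · rintro ⟨x, rfl⟩
    rcases eq_or_ne x 0 with rfl | hx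
    · left; exact G.ordered_i.1
    · right
      have : β (G.i x) = G.gamma x := by
        have h := congrFun G.factorization (G.i x)
        rw [h]; simp [G.collapse_i.1 x]
      simp only [Set.mem_setOf_eq, this]
      intro h
      exact hx (G.regular_gamma.2 x h)
  · rintro (rfl | hy)
    · exact ⟨0, G.ordered_i.1⟩
    · by_contra hrange
      have h0 : G.istar y = 0 := G.collapse_i.2 y (fun x hx => hrange ⟨x, hx⟩)
      have : β y = 0 := by
        have h := congrFun G.factorization y
        rw [h]; simp [h0, G.regular_gamma.1]
      exact hy this

/-- Any two cokernel factorizations of the same map are equal. -/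
lemma cf_unique {m n : ℕ} {β : Fin (m + 1) → Fin (n + 1)}
    (G F : CokernelFactorization β) : G = F := by
  have hrange : Set.range G.i = Set.range F.i := by
    rw [cf_range G, cf_range F]
  have hr : G.r = F.r := by
    have h1 : Nat.card ↑(Set.range G.i) = G.r + 1 := by
      rw [Nat.card_range_of_injective G.ordered_i.2.injective]; simp
    have h2 : Nat.card ↑(Set.range F.i) = F.r + 1 := by
      rw [Nat.card_range_of_injective F.ordered_i.2.injective]; simp
    rw [hrange, h2] at h1
    omega
  obtain ⟨r1, i1, s1, g1, o1, c1, rg1, f1⟩ := G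
  obtain ⟨r2, i2, s2, g2, o2, c2, rg2, f2⟩ := F
  dsimp at hrange hr
  subst hr
  have hi : i1 = i2 := (@StrictMono.range_inj _ _ _ _ (inferInstanceAs (WellFoundedLT (Fin (r1 + 1)))) i1 i2 o1.2 o2.2).mp hrange
  subst hi
  have hs : s1 = s2 := by
    funext y
    by_cases hy : ∃ x, i1 x = y
    · obtain ⟨x, rfl⟩ := hy
      rw [c1.1 x, c2.1 x]
    · push_neg at hy
      rw [c1.2 y hy, c2.2 y hy]
  subst hs
  have hg : g1 = g2 := by
    funext x
    have h1 : g1 x = β (i1 x) := by rw [f1]; simp [c1.1 x]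
    have h2 : g2 x = β (i1 x) := by rw [f2]; simp [c2.1 x]
    rw [h1, h2]
  subst hg
  rfl

/-- Every based map `β : m₊ → n₊` factors uniquely as `β = γ ∘ i*` with `i`
ordered and `γ` regular; `i` represents the complement of `β⁻¹(0)`. -/
theorem cokernel_factorization_existsUnique {m n : ℕ}
    (β : Fin (m + 1) → Fin (n + 1)) (hβ : β 0 = 0) :
    ∃ F : CokernelFactorization β,
      Set.range F.i = insert 0 {x | β x ≠ 0} ∧
      ∀ G : CokernelFactorization β, G = F := by
  classical
  set S : Finset (Fin (m + 1)) := insert 0 (Finset.univ.filter (fun x => β x ≠ 0)) with hS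
  have h0S : (0 : Fin (m + 1)) ∈ S := Finset.mem_insert_self _ _
  have hcard : 1 ≤ S.card := Finset.card_pos.mpr ⟨0, h0S⟩
  obtain ⟨r, hr⟩ : ∃ r, S.card = r + 1 := ⟨S.card - 1, by omega⟩
  let e : Fin (r + 1) ≃o {x // x ∈ S} := S.orderIsoOfFin hr
  let i : Fin (r + 1) → Fin (m + 1) := fun x => (e x : Fin (m + 1))
  have hmono : StrictMono i := fun a b hab => e.strictMono hab
  have hi0 : i 0 = 0 := by
    rcases eq_or_ne (i 0) 0 with h | h
    · exact h
    · exfalso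
      set x := e.symm ⟨0, h0S⟩ with hx
      have hix : i x = 0 := by
        simp only [i, hx, OrderIso.apply_symm_apply]
      rcases eq_or_ne x 0 with h0 | h0
      · rw [h0] at hix; exact h hix
      · have : (0 : Fin (r + 1)) < x := Fin.pos_of_ne_zero h0
        have := hmono this
        rw [hix] at this
        exact absurd this (by simp)
  let istar : Fin (m + 1) → Fin (r + 1) :=
    fun y => if h : y ∈ S then e.symm ⟨y, h⟩ else 0
  have hcoll1 : ∀ x, istar (i x) = x := by
    intro x
    have hmem : i x ∈ S := (e x).2
    simp only [istar, dif_pos hmem]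
    have : (⟨i x, hmem⟩ : {x // x ∈ S}) = e x := rfl
    rw [this, OrderIso.symm_apply_apply]
  have hnotS : ∀ y, y ∉ S → β y = 0 := by
    intro y hy
    by_contra h
    exact hy (by simp [hS, h])
  let gamma : Fin (r + 1) → Fin (n + 1) := fun x => β (i x)
  have hfact : β = gamma ∘ istar := by
    funext y
    by_cases hy : y ∈ S
    · simp only [Function.comp, istar, dif_pos hy, gamma]
      have : i (e.symm ⟨y, hy⟩) = y := by
        simp only [i, OrderIso.apply_symm_apply]
      rw [this]
    · simp only [Function.comp, istar, dif_neg hy, gamma, hi0]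
      rw [hnotS y hy, hβ]
  refine ⟨⟨r, i, istar, gamma, ⟨hi0, hmono⟩,
    ⟨hcoll1, fun y hy => ?_⟩,
    ⟨by simp [gamma, hi0, hβ], fun x hx => ?_⟩, hfact⟩, ?_, fun G => cf_unique G _⟩
  · -- collapse second condition
    have hyS : y ∉ S := by
      intro hyS
      exact hy (e.symm ⟨y, hyS⟩) (by simp only [i, OrderIso.apply_symm_apply])
    simp only [istar, dif_neg hyS]
  · -- regularity of gamma
    by_contra h0
    have hmem : i x ∈ S := (e x).2
    have : i x ≠ 0 := by
      intro h
      have := hmono.injective (h.trans hi0.symm)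
      exact h0 this
    have : β (i x) ≠ 0 := by
      rcases Finset.mem_insert.mp hmem with h | h
      · exact absurd h this
      · exact (Finset.mem_filter.mp h).2
    exact this hx
  · -- range condition
    apply cf_range
end

section
/- Given ordered maps j : r₊ → n₊ and k : s₊ → n₊, there exist a unique natural number t and unique ordered maps p : t₊ → r₊ and q : t₊ → s₊ such that j ∘ p = k ∘ q and the image of j ∘ p equals the intersection of the images of j and k. Moreover the resulting commutative square is a pullback in the category of based sets; thus pullbacks of ordered maps correspond to intersections of the subsets they represent. -/
/-- The data of a commutative square `j ∘ p = k ∘ q` of ordered maps over the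
cospan `j, k`, whose image is the intersection of the images of `j` and `k`. -/
structure OrderedPullbackSquare {r s n : ℕ}
    (j : Fin (r + 1) → Fin (n + 1)) (k : Fin (s + 1) → Fin (n + 1)) where
  t : ℕ
  p : Fin (t + 1) → Fin (r + 1)
  q : Fin (t + 1) → Fin (s + 1)
  ordered_p : OrderedMap p
  ordered_q : OrderedMap q
  comm : j ∘ p = k ∘ q
  image : Set.range (j ∘ p) = Set.range j ∩ Set.range k

/-- Given ordered maps `j : r₊ → n₊` and `k : s₊ → n₊`, there exist a unique
`t` and unique ordered maps `p : t₊ → r₊`, `q : t₊ → s₊` with `j ∘ p = k ∘ q`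
and image of `j ∘ p` equal to the intersection of the images of `j` and `k`;
moreover the resulting square is a pullback of based sets. -/
theorem ordered_pullback_existsUnique {r s n : ℕ}
    (j : Fin (r + 1) → Fin (n + 1)) (k : Fin (s + 1) → Fin (n + 1))
    (hj : OrderedMap j) (hk : OrderedMap k) :
    ∃ F : OrderedPullbackSquare j k,
      (∀ (y : Fin (r + 1)) (z : Fin (s + 1)), j y = k z →
        ∃! x : Fin (F.t + 1), F.p x = y ∧ F.q x = z) ∧
      ∀ G : OrderedPullbackSquare j k, G = F := by
  classical
  set I : Finset (Fin (n + 1)) := (Set.range j ∩ Set.range k).toFinset with hI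
  have hIcoe : (I : Set (Fin (n + 1))) = Set.range j ∩ Set.range k := by
    simp [hI]
  have h0I : (0 : Fin (n + 1)) ∈ I := by
    rw [← Finset.mem_coe, hIcoe]
    exact ⟨⟨0, hj.1⟩, ⟨0, hk.1⟩⟩
  have hpos : 0 < I.card := Finset.card_pos.2 ⟨0, h0I⟩
  set t : ℕ := I.card - 1 with ht
  have hcard : I.card = t + 1 := by omega
  set m : Fin (t + 1) → Fin (n + 1) := fun x => I.orderEmbOfFin hcard x with hm
  have hmmono : StrictMono m := (I.orderEmbOfFin hcard).strictMono
  have hmrange : Set.range m = (I : Set (Fin (n + 1))) := I.range_orderEmbOfFin hcard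
  have hm0 : m 0 = 0 := by
    have : (0 : Fin (n + 1)) ∈ Set.range m := by rw [hmrange]; exact h0I
    obtain ⟨x, hx⟩ := this
    exact le_antisymm (hx ▸ hmmono.monotone (Fin.zero_le x)) (Fin.zero_le _)
  have hmj : ∀ x, m x ∈ Set.range j := by
    intro x
    have : m x ∈ Set.range m := ⟨x, rfl⟩
    rw [hmrange, hIcoe] at this
    exact this.1
  have hmk : ∀ x, m x ∈ Set.range k := by
    intro x
    have : m x ∈ Set.range m := ⟨x, rfl⟩
    rw [hmrange, hIcoe] at this
    exact this.2
  set p : Fin (t + 1) → Fin (r + 1) := fun x => (hmj x).choose with hp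
  set q : Fin (t + 1) → Fin (s + 1) := fun x => (hmk x).choose with hq
  have hjp : ∀ x, j (p x) = m x := fun x => (hmj x).choose_spec
  have hkq : ∀ x, k (q x) = m x := fun x => (hmk x).choose_spec
  have hjcomp : j ∘ p = m := funext hjp
  have hkcomp : k ∘ q = m := funext hkq
  have hpmono : StrictMono p := fun a b hab => by
    have := hmmono hab
    rw [← hjp a, ← hjp b] at this
    exact hj.2.lt_iff_lt.1 this
  have hqmono : StrictMono q := fun a b hab => by
    have := hmmono hab
    rw [← hkq a, ← hkq b] at this
    exact hk.2.lt_iff_lt.1 this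
  have hp0 : p 0 = 0 := hj.2.injective (by rw [hjp, hm0, hj.1])
  have hq0 : q 0 = 0 := hk.2.injective (by rw [hkq, hm0, hk.1])
  have himg : Set.range (j ∘ p) = Set.range j ∩ Set.range k := by
    rw [hjcomp, hmrange, hIcoe]
  refine ⟨⟨t, p, q, ⟨hp0, hpmono⟩, ⟨hq0, hqmono⟩, hjcomp.trans hkcomp.symm, himg⟩,
    ?_, ?_⟩
  · intro y z hyz
    have hmem : j y ∈ Set.range m := by
      rw [hmrange, ← Finset.mem_coe] at *
      rw [hIcoe]
      exact ⟨⟨y, rfl⟩, ⟨z, hyz.symm⟩⟩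
    obtain ⟨x, hx⟩ := hmem
    refine ⟨x, ⟨hj.2.injective (by rw [hjp, hx]),
      hk.2.injective (by rw [hkq, hx, hyz])⟩, ?_⟩
    intro x' hx'
    obtain ⟨h1, h2⟩ := hx'
    apply hpmono.injective
    apply hj.2.injective
    show j (p x') = j (p x)
    rw [hjp, hjp, hx, ← h1]
    exact (hjp x').symm
  · rintro ⟨t', p', q', hp', hq', comm', im'⟩
    have hjp'mono : StrictMono (j ∘ p') := hj.2.comp hp'.2
    have hrange' : Set.range (j ∘ p') = Set.range m := by
      rw [im', hmrange, hIcoe]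
    have hcard' : t' = t := by
      have h1 : Nat.card (Set.range (j ∘ p')) = t' + 1 := by
        rw [Nat.card_range_of_injective hjp'mono.injective, Nat.card_eq_fintype_card,
          Fintype.card_fin]
      have h2 : Nat.card (Set.range m) = t + 1 := by
        rw [Nat.card_range_of_injective hmmono.injective, Nat.card_eq_fintype_card,
          Fintype.card_fin]
      rw [hrange'] at h1
      omega
    subst hcard'
    haveI : WellFoundedLT (Fin (t + 1)) := inferInstance
    have hjpm : j ∘ p' = m := hjp'mono.range_inj hmmono |>.1 hrange'
    have hpp : p' = p := by
      funext x
      apply hj.2.injective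
      rw [hjp]
      exact congrFun hjpm x
    have hkqm : k ∘ q' = m := by rw [← comm', hjpm]
    have hqq : q' = q := by
      funext x
      apply hk.2.injective
      rw [hkq]
      exact congrFun hkqm x
    subst hpp; subst hqq
    rfl
end

section
/- Let α : m₊ → n₊ be a regular surjective based map and let i : k₊ → n₊ be an ordered map. Then there exist a natural number p, an ordered map i' : p₊ → m₊, and a regular surjective based map α' : p₊ → k₊ such that α ∘ i' = i ∘ α', the image of i' equals the preimage under α of the image of i (together with the basepoint), and the resulting commutative square is a pullback in the category of based sets. -/
/-- The pullback of a regular surjective based map `α : m₊ → n₊` along an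
ordered map `i : k₊ → n₊`: there are an ordered map `i' : p₊ → m₊` and a
regular surjective based map `α' : p₊ → k₊` with `α ∘ i' = i ∘ α'`, the image
of `i'` is the preimage under `α` of the image of `i` (which contains the
basepoint), and the square is a pullback of based sets. -/
theorem regular_pullback_ordered {m n k : ℕ}
    (α : Fin (m + 1) → Fin (n + 1)) (i : Fin (k + 1) → Fin (n + 1))
    (hα : RegularMap α) (hαsurj : Function.Surjective α) (hi : OrderedMap i) :
    ∃ (p : ℕ) (i' : Fin (p + 1) → Fin (m + 1)) (α' : Fin (p + 1) → Fin (k + 1)),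
      OrderedMap i' ∧ RegularMap α' ∧ Function.Surjective α' ∧
      α ∘ i' = i ∘ α' ∧
      Set.range i' = α ⁻¹' (Set.range i) ∧
      ∀ (x : Fin (m + 1)) (y : Fin (k + 1)), α x = i y →
        ∃! z : Fin (p + 1), i' z = x ∧ α' z = y := by
  classical
  obtain ⟨hi0, himono⟩ := hi
  obtain ⟨hα0, hαreg⟩ := hα
  have hiinj : Function.Injective i := himono.injective
  set s : Finset (Fin (m + 1)) := Finset.univ.filter (fun x => ∃ y, i y = α x) with hs
  have hmem : ∀ x, x ∈ s ↔ ∃ y, i y = α x := by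
    intro x; simp [hs]
  have h0s : (0 : Fin (m + 1)) ∈ s := (hmem 0).2 ⟨0, by rw [hi0, hα0]⟩
  have hpos : 0 < s.card := Finset.card_pos.mpr ⟨0, h0s⟩
  obtain ⟨p, hp⟩ : ∃ p, s.card = p + 1 := ⟨s.card - 1, (Nat.succ_pred_eq_of_pos hpos).symm⟩
  set i' : Fin (p + 1) → Fin (m + 1) := fun z => s.orderEmbOfFin hp z with hi'def
  have hi'mono : StrictMono i' := (s.orderEmbOfFin hp).strictMono
  have hi'inj : Function.Injective i' := hi'mono.injective
  have hi'mem : ∀ z, i' z ∈ s := fun z => s.orderEmbOfFin_mem hp z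
  have hi'range : Set.range i' = ↑s := s.range_orderEmbOfFin hp
  have hi'0 : i' 0 = 0 := by
    have h1 : i' 0 = s.min' ⟨0, h0s⟩ := Finset.orderEmbOfFin_zero hp (Nat.succ_pos p)
    exact h1.trans (le_antisymm (s.min'_le 0 h0s) (Fin.zero_le _))
  have hex : ∀ z : Fin (p + 1), ∃ y, i y = α (i' z) := fun z => (hmem _).1 (hi'mem z)
  set α' : Fin (p + 1) → Fin (k + 1) := fun z => Classical.choose (hex z) with hα'def
  have hα'spec : ∀ z, i (α' z) = α (i' z) := fun z => Classical.choose_spec (hex z)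
  refine ⟨p, i', α', ⟨hi'0, hi'mono⟩, ⟨?_, ?_⟩, ?_, ?_, ?_, ?_⟩
  · apply hiinj
    rw [hα'spec, hi'0, hα0, hi0]
  · intro z hz
    apply hi'inj
    rw [hi'0]
    apply hαreg
    rw [← hα'spec, hz, hi0]
  · intro y
    obtain ⟨x, hx⟩ := hαsurj (i y)
    have hxs : x ∈ s := (hmem x).2 ⟨y, hx.symm⟩
    obtain ⟨z, hz⟩ : ∃ z, i' z = x := by
      have : x ∈ Set.range i' := hi'range ▸ hxs
      exact this
    exact ⟨z, hiinj (by rw [hα'spec, hz, hx])⟩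
  · funext z; exact (hα'spec z).symm
  · rw [hi'range]
    ext x
    simp only [Finset.coe_filter, Set.mem_preimage, Set.mem_setOf_eq, Set.mem_range, hs]
    simp [eq_comm]
  · intro x y hxy
    have hxs : x ∈ s := (hmem x).2 ⟨y, hxy.symm⟩
    obtain ⟨z, hz⟩ : ∃ z, i' z = x := by
      have : x ∈ Set.range i' := hi'range ▸ hxs
      exact this
    have hα'z : α' z = y := hiinj (by rw [hα'spec, hz, hxy])
    exact ⟨z, ⟨hz, hα'z⟩, fun z' ⟨hz', _⟩ => hi'inj (hz'.trans hz.symm)⟩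
end

section
/- A based map β : m₊ → n₊ satisfies that the preimage β⁻¹(y) of every nonzero y ∈ n₊ has at most one element if and only if β factors as β = j ∘ π ∘ i*, where i : r₊ → m₊ and j : r₊ → n₊ are ordered maps (for the same r), i* is the collapse of i, and π : r₊ → r₊ is a based bijection; moreover, when such a factorization exists, r, i, j and π are uniquely determined by β. -/
/-- The data of a factorization `β = j ∘ π ∘ i*` of a based map `β : m₊ → n₊`,
where `i : r₊ → m₊` and `j : r₊ → n₊` are ordered maps, `i*` is the collapse
of `i`, and `π : r₊ → r₊` is a based bijection. -/
structure GenInjFactorization {m n : ℕ} (β : Fin (m + 1) → Fin (n + 1)) where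
  r : ℕ
  i : Fin (r + 1) → Fin (m + 1)
  istar : Fin (m + 1) → Fin (r + 1)
  pi : Fin (r + 1) → Fin (r + 1)
  j : Fin (r + 1) → Fin (n + 1)
  ordered_i : OrderedMap i
  collapse_i : CollapseOf i istar
  based_pi : pi 0 = 0
  bijective_pi : Function.Bijective pi
  ordered_j : OrderedMap j
  factorization : β = j ∘ pi ∘ istar

section Helpers

variable {m n : ℕ} {β : Fin (m + 1) → Fin (n + 1)}

lemma GenInjFactorization.beta_apply (F : GenInjFactorization β) (x : Fin (m + 1)) :
    β x = F.j (F.pi (F.istar x)) := congrFun F.factorization x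

lemma GenInjFactorization.eq_i_istar (F : GenInjFactorization β) {x : Fin (m + 1)}
    (hx : β x ≠ 0) : F.i (F.istar x) = x := by
  by_cases h : ∃ k, F.i k = x
  · obtain ⟨k, rfl⟩ := h
    rw [F.collapse_i.1]
  · push_neg at h
    exfalso
    apply hx
    rw [F.beta_apply, F.collapse_i.2 x h, F.based_pi, F.ordered_j.1]

lemma GenInjFactorization.range_i (F : GenInjFactorization β) :
    Set.range F.i = {x | β x ≠ 0} ∪ {0} := by
  ext x
  constructor
  · rintro ⟨k, rfl⟩
    by_cases hk : k = 0
    · right; simp [hk, F.ordered_i.1]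
    · left
      show β (F.i k) ≠ 0
      rw [F.beta_apply, F.collapse_i.1]
      intro h
      have hpk : F.pi k ≠ 0 := fun hp => hk (F.bijective_pi.1 (hp.trans F.based_pi.symm))
      have : (0 : Fin (F.r + 1)) < F.pi k := Fin.pos_of_ne_zero hpk
      have := F.ordered_j.2 this
      rw [F.ordered_j.1, h] at this
      exact absurd this (lt_irrefl 0)
  · rintro (hx | hx)
    · exact ⟨F.istar x, F.eq_i_istar hx⟩
    · exact ⟨0, by simp [Set.mem_singleton_iff.mp hx, F.ordered_i.1]⟩

lemma GenInjFactorization.range_j (F : GenInjFactorization β) :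
    Set.range F.j = β '' Set.range F.i := by
  have h1 : Set.range F.j = Set.range (F.j ∘ F.pi) :=
    (F.bijective_pi.2.range_comp F.j).symm
  have h2 : F.j ∘ F.pi = β ∘ F.i := by
    funext k
    simp only [Function.comp_apply]
    rw [F.beta_apply, F.collapse_i.1]
  rw [h1, h2, Set.range_comp]

lemma GenInjFactorization.card_r (F : GenInjFactorization β) :
    (Finset.univ.image F.i).card = F.r + 1 := by
  rw [Finset.card_image_of_injective _ F.ordered_i.2.injective, Finset.card_univ,
    Fintype.card_fin]

end Helpers

/-- A based map `β : m₊ → n₊` has all preimages of nonzero points of size at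
most one iff it factors as `β = j ∘ π ∘ i*` with `i`, `j` ordered, `i*` the
collapse of `i`, and `π` a based bijection; such a factorization is unique. -/
theorem genInj_factorization_iff {m n : ℕ}
    (β : Fin (m + 1) → Fin (n + 1)) (hβ : β 0 = 0) :
    ((∀ y : Fin (n + 1), y ≠ 0 → Set.Subsingleton (β ⁻¹' {y})) ↔
      Nonempty (GenInjFactorization β)) ∧
    ∀ F G : GenInjFactorization β, F = G := by
  classical
  constructor
  · constructor
    · -- existence
      intro hsub
      set S0 : Finset (Fin (m + 1)) := Finset.univ.filter (fun x => β x ≠ 0) with hS0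
      set S : Finset (Fin (m + 1)) := insert 0 S0 with hS
      have h0S0 : (0 : Fin (m + 1)) ∉ S0 := by simp [hS0, hβ]
      set r : ℕ := S0.card with hr
      have hcardS : S.card = r + 1 := by rw [hS, Finset.card_insert_of_notMem h0S0]
      have hmemS : ∀ x, x ∈ S ↔ (x = 0 ∨ β x ≠ 0) := by
        intro x; simp [hS, hS0]
      -- injectivity of β on S
      have hinjS : Set.InjOn β ↑S := by
        intro x1 h1 x2 h2 hb
        by_cases hx1 : β x1 = 0
        · have hx2 : β x2 = 0 := hb ▸ hx1
          have e1 : x1 = 0 := by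
            rcases (hmemS x1).1 h1 with h | h
            · exact h
            · exact absurd hx1 h
          have e2 : x2 = 0 := by
            rcases (hmemS x2).1 h2 with h | h
            · exact h
            · exact absurd hx2 h
          rw [e1, e2]
        · exact hsub (β x1) hx1 (Set.mem_preimage.mpr rfl)
            (Set.mem_preimage.mpr (by simp [hb]))
      set T : Finset (Fin (n + 1)) := S.image β with hT
      have hcardT : T.card = r + 1 := by
        rw [hT, Finset.card_image_of_injOn hinjS, hcardS]
      set e : Fin (r + 1) ≃o ↥(S : Finset (Fin (m + 1))) := S.orderIsoOfFin hcardS with he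
      set f : Fin (r + 1) ≃o ↥(T : Finset (Fin (n + 1))) := T.orderIsoOfFin hcardT with hf
      set i : Fin (r + 1) → Fin (m + 1) := fun k => (e k : Fin (m + 1)) with hi
      set j : Fin (r + 1) → Fin (n + 1) := fun k => (f k : Fin (n + 1)) with hj
      have hmono_i : StrictMono i := fun a b h => by
        exact_mod_cast e.strictMono h
      have hmono_j : StrictMono j := fun a b h => by
        exact_mod_cast f.strictMono h
      have hi0 : i 0 = 0 := by
        obtain ⟨k, hk⟩ : ∃ k, i k = 0 :=
          ⟨e.symm ⟨0, Finset.mem_insert_self _ _⟩, by simp [hi]⟩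
        have := hmono_i.monotone (Fin.zero_le k)
        rw [hk] at this
        exact le_antisymm this (Fin.zero_le _)
      have h0T : (0 : Fin (n + 1)) ∈ T := by
        rw [hT]
        exact Finset.mem_image.mpr ⟨0, Finset.mem_insert_self _ _, hβ⟩
      have hj0 : j 0 = 0 := by
        obtain ⟨k, hk⟩ : ∃ k, j k = 0 := ⟨f.symm ⟨0, h0T⟩, by simp [hj]⟩
        have := hmono_j.monotone (Fin.zero_le k)
        rw [hk] at this
        exact le_antisymm this (Fin.zero_le _)
      set istar : Fin (m + 1) → Fin (r + 1) :=
        fun y => if h : y ∈ S then e.symm ⟨y, h⟩ else 0 with histar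
      have hcollapse : CollapseOf i istar := by
        constructor
        · intro k
          have hmem : i k ∈ S := (e k).2
          rw [histar]
          simp only [hmem, dif_pos]
          have : (⟨i k, hmem⟩ : ↥S) = e k := Subtype.ext rfl
          rw [this, e.symm_apply_apply]
        · intro y hy
          have : y ∉ S := by
            intro hmem
            exact hy (e.symm ⟨y, hmem⟩) (by simp [hi])
          rw [histar]
          simp [this]
      have hmemT : ∀ k, β (i k) ∈ T := fun k =>
        Finset.mem_image.mpr ⟨i k, (e k).2, rfl⟩
      set pi : Fin (r + 1) → Fin (r + 1) := fun k => f.symm ⟨β (i k), hmemT k⟩ with hpi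
      have hpi0 : pi 0 = 0 := by
        rw [hpi]
        simp only
        have h1 : (⟨β (i 0), hmemT 0⟩ : ↥T) = f 0 := by
          apply Subtype.ext
          simp [hi0, hβ, ← hj0, hj]
        rw [h1, f.symm_apply_apply]
      have hpinj : Function.Injective pi := by
        intro k1 k2 h
        have h2 : β (i k1) = β (i k2) := by
          have := f.symm.injective.eq_iff.mp h
          exact Subtype.ext_iff.mp this
        exact hmono_i.injective (hinjS (e k1).2 (e k2).2 h2)
      have hfac : β = j ∘ pi ∘ istar := by
        funext x
        simp only [Function.comp_apply]
        by_cases hx : x ∈ S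
        · rw [histar]
          simp only [hx, dif_pos]
          have hix : i (e.symm ⟨x, hx⟩) = x := by simp [hi]
          have hjp : ∀ k, j (pi k) = β (i k) := by
            intro k
            rw [hpi, hj]
            simp only
            rw [f.apply_symm_apply]
          rw [hjp, hix]
        · have hbx : β x = 0 := by
            by_contra hb
            exact hx ((hmemS x).2 (Or.inr hb))
          have hx0 : istar x = 0 := by rw [histar]; simp [hx]
          rw [hx0, hpi0, hj0, hbx]
      exact ⟨⟨r, i, istar, pi, j, ⟨hi0, hmono_i⟩, hcollapse, hpi0,
        (Finite.injective_iff_bijective).mp hpinj, ⟨hj0, hmono_j⟩, hfac⟩⟩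
    · -- converse
      rintro ⟨F⟩ y hy x1 hx1 x2 hx2
      have hb1 : β x1 = y := hx1
      have hb2 : β x2 = y := hx2
      have h1 : β x1 ≠ 0 := hb1 ▸ hy
      have h2 : β x2 ≠ 0 := hb2 ▸ hy
      have hjinj : Function.Injective F.j := F.ordered_j.2.injective
      have heq : F.istar x1 = F.istar x2 := by
        apply F.bijective_pi.1
        apply hjinj
        rw [← F.beta_apply, ← F.beta_apply, hb1, hb2]
      calc x1 = F.i (F.istar x1) := (F.eq_i_istar h1).symm
        _ = F.i (F.istar x2) := by rw [heq]
        _ = x2 := F.eq_i_istar h2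
  · -- uniqueness
    intro F G
    have hrange : Set.range F.i = Set.range G.i := F.range_i.trans G.range_i.symm
    have hrangej : Set.range F.j = Set.range G.j := by
      rw [F.range_j, G.range_j, hrange]
    have hfin : Finset.univ.image F.i = Finset.univ.image G.i := by
      apply Finset.coe_injective
      simpa [Finset.coe_image, Set.image_univ] using hrange
    have hr : F.r = G.r := by
      have := F.card_r
      rw [hfin, G.card_r] at this
      omega
    obtain ⟨r1, i1, istar1, pi1, j1, oi1, ci1, bp1, bij1, oj1, fac1⟩ := F
    obtain ⟨r2, i2, istar2, pi2, j2, oi2, ci2, bp2, bij2, oj2, fac2⟩ := G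
    obtain rfl : r1 = r2 := hr
    haveI : WellFoundedLT (Fin (r1 + 1)) := inferInstance
    obtain rfl : i1 = i2 := (oi1.2.range_inj oi2.2).1 hrange
    obtain rfl : j1 = j2 := (oj1.2.range_inj oj2.2).1 hrangej
    obtain rfl : istar1 = istar2 := by
      funext x
      by_cases hx : ∃ k, i1 k = x
      · obtain ⟨k, rfl⟩ := hx
        rw [ci1.1, ci2.1]
      · push_neg at hx
        rw [ci1.2 x hx, ci2.2 x hx]
    obtain rfl : pi1 = pi2 := by
      funext k
      apply oj1.2.injective
      have e1 : β (i1 k) = j1 (pi1 (istar1 (i1 k))) := congrFun fac1 _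
      have e2 : β (i1 k) = j1 (pi2 (istar1 (i1 k))) := congrFun fac2 _
      rw [ci1.1] at e1 e2
      rw [← e1, ← e2]
    rfl
end
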